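/- Let k ≥ 2, G be 2k-meager, X = {u_1,...,u_l} ⊆ W be 6k-scattered, Y ⊆ W with X ∩ cl(Y) = ∅ and |Y| < k, and φ a local automorphism of the feet-induced substructure on Y. Then for all tuples u, u' of feet with u_i, u'_i feet of segment u_i for each i, there is an extension ψ of φ to an automorphism of the feet-induced substructure on X ∪ Y with ψ(u) = u'. -/
import Mathlib


variable {V W : Type*}

/-- The incidence graph of a bipartite constraint graph given by neighborhoods `N`. -/
def biGraph (N : V → Set W) : SimpleGraph (V ⊕ W) :=
  SimpleGraph.fromRel (fun a b =>
    match a, b with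
    | Sum.inl v, Sum.inr w => w ∈ N v
    | _, _ => False)

/-- The attractor of a set of segments. -/
def attractor (N : V → Set W) (X : Set W) : Set W :=
  X ∪ ⋃ v ∈ {v : V | (N v \ X).ncard ≤ 1}, N v

/-- A set of segments is closed if it equals its attractor. -/
def IsClosedSeg (N : V → Set W) (X : Set W) : Prop := attractor N X = X

/-- The closure of a set of segments: the minimal closed superset. -/
def clW (N : V → Set W) (X : Set W) : Set W := ⋂₀ {Y | X ⊆ Y ∧ IsClosedSeg N Y}

/-- `G` is `k`-meager. -/
def Meager (N : V → Set W) (k : ℕ) : Prop :=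
  ∀ X : Set W, X.ncard ≤ 2 * k → {v : V | N v ⊆ X}.ncard ≤ 2 * X.ncard

/-- `X` is `k`-scattered: distinct segments of `X` have pairwise distance at least `2k`. -/
def Scattered (N : V → Set W) (k : ℕ) (X : Set W) : Prop :=
  ∀ u ∈ X, ∀ w ∈ X, u ≠ w →
    ((2 * k : ℕ) : ℕ∞) ≤ (biGraph N).edist (Sum.inr u) (Sum.inr w)

/-- The vertices of the feet-induced subgraph on a set `X` of segments:
all segments of `X` and all constraint vertices all whose neighbors lie in `X`. -/
def footVerts (N : V → Set W) (X : Set W) : Set (V ⊕ W) :=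
  Sum.inr '' X ∪ Sum.inl '' {v | N v ⊆ X}

/-- `Y` is a component of `X`: the feet-induced subgraph on `Y` is a connected
component of the feet-induced subgraph on `X`. -/
def IsComponent (N : V → Set W) (X Y : Set W) : Prop :=
  Y ⊆ X ∧
  ∃ C : ((biGraph N).induce (footVerts N X)).ConnectedComponent,
    footVerts N Y =
      Subtype.val '' {a | ((biGraph N).induce (footVerts N X)).connectedComponentMk a = C}
variable {V W : Type*}

/-- The neighborhood of a constraint vertex, given the ordered triple of its neighbors. -/
def nbrSet (nbr : V → W × W × W) : V → Set W :=
  fun v => {(nbr v).1, (nbr v).2.1, (nbr v).2.2}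

/-- The ternary relation of the multipede `M(G)`: for every constraint vertex `v` with
ordered neighbors `(u¹,u²,u³)`, all triples of feet `(u¹_{i₁}, u²_{i₂}, u³_{i₃})` with
`i₁ + i₂ + i₃ = 0` in `F₂`. Feet are pairs `(segment, index)`. -/
def multiRel (nbr : V → W × W × W) :
    (W × ZMod 2) → (W × ZMod 2) → (W × ZMod 2) → Prop :=
  fun a b c => (∃ v, nbr v = (a.1, b.1, c.1)) ∧ a.2 + b.2 + c.2 = 0

/-- `G` is odd. -/
def OddBipartite' (N : V → Set W) : Prop :=
  ∀ X : Set W, X.Nonempty → ∃ v : V, Odd (N v ∩ X).ncard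

section AuxLemmas

lemma attractor_mono' [Finite W] (N : V → Set W) {X Y : Set W} (h : X ⊆ Y) :
    attractor N X ⊆ attractor N Y := by
  apply Set.union_subset_union h
  refine Set.iUnion_mono fun v => Set.iUnion_subset fun hv => ?_
  refine Set.subset_iUnion_of_subset ?_ le_rfl
  exact le_trans (Set.ncard_le_ncard (Set.diff_subset_diff_right h) (Set.toFinite _)) hv

lemma subset_attractor' (N : V → Set W) (X : Set W) : X ⊆ attractor N X :=
  Set.subset_union_left

lemma subset_clW' (N : V → Set W) (X : Set W) : X ⊆ clW N X :=
  Set.subset_sInter fun _ hZ => hZ.1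

lemma isClosedSeg_clW' [Finite W] (N : V → Set W) (X : Set W) :
    IsClosedSeg N (clW N X) := by
  refine le_antisymm ?_ (subset_attractor' N _)
  refine Set.subset_sInter fun Z hZ => ?_
  have h1 : clW N X ⊆ Z := Set.sInter_subset_of_mem hZ
  calc attractor N (clW N X) ⊆ attractor N Z := attractor_mono' N h1
    _ = Z := hZ.2

lemma nbr_subset_of_closed [Finite W] (N : V → Set W) {Z : Set W}
    (hZ : IsClosedSeg N Z) {v : V} (hv : (N v \ Z).ncard ≤ 1) : N v ⊆ Z := by
  have h : N v ⊆ attractor N Z := by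
    refine Set.subset_union_of_subset_right ?_ _
    exact Set.subset_biUnion_of_mem (u := N) hv
  rwa [hZ] at h

end AuxLemmas

/-- Let `k ≥ 2`, `G` be `2k`-meager, `X = {u₁,…,u_l} ⊆ W` be
`6k`-scattered, `Y ⊆ W` with `X ∩ cl(Y) = ∅` and `|Y| < k`, and `φ` a local automorphism of
the feet-induced substructure on `Y`. Then for all tuples `u, u'` of feet with `uᵢ, u'ᵢ`
feet of the segment `uᵢ`, there is an extension `ψ` of `φ` to an automorphism of the
feet-induced substructure on `X ∪ Y` with `ψ(u) = u'`. -/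
theorem local_aut_extends_scattered {V W : Type*} [Finite V] [Finite W]
    (nbr : V → W × W × W) (hdeg : ∀ v, (nbrSet nbr v).ncard = 3)
    (k : ℕ) (hk : 2 ≤ k) (hmeager : Meager (nbrSet nbr) (2 * k))
    (l : ℕ) (us : Fin l → W) (husinj : Function.Injective us)
    (hscat : Scattered (nbrSet nbr) (6 * k) (Set.range us))
    (Y : Set W) (hY : Y.ncard < k)
    (hdisj : Set.range us ∩ clW (nbrSet nbr) Y = ∅)
    (φ : {p : W × ZMod 2 // p.1 ∈ Y} ≃ {p : W × ZMod 2 // p.1 ∈ Y})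
    (hseg : ∀ p, (φ p : W × ZMod 2).1 = (p : W × ZMod 2).1)
    (hrel : ∀ a b c, multiRel nbr (φ a) (φ b) (φ c) ↔
      multiRel nbr (a : W × ZMod 2) (b : W × ZMod 2) (c : W × ZMod 2))
    (a a' : Fin l → ZMod 2) :
    ∃ ψ : {p : W × ZMod 2 // p.1 ∈ Set.range us ∪ Y} ≃
          {p : W × ZMod 2 // p.1 ∈ Set.range us ∪ Y},
      (∀ p, (ψ p : W × ZMod 2).1 = (p : W × ZMod 2).1) ∧
      (∀ x y z, multiRel nbr (ψ x) (ψ y) (ψ z) ↔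
        multiRel nbr (x : W × ZMod 2) (y : W × ZMod 2) (z : W × ZMod 2)) ∧
      (∀ (p : W × ZMod 2) (hp : p.1 ∈ Y) (hp' : p.1 ∈ Set.range us ∪ Y),
        (ψ ⟨p, hp'⟩ : W × ZMod 2) = (φ ⟨p, hp⟩ : W × ZMod 2)) ∧
      (∀ i : Fin l,
        (ψ ⟨(us i, a i), Or.inl ⟨i, rfl⟩⟩ : W × ZMod 2) = (us i, a' i)) := by
  classical
  set N := nbrSet nbr with hN
  have hYcl : Y ⊆ clW N Y := subset_clW' N Y
  -- the flip of each segment of Y under φ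
  set δ : W → ZMod 2 :=
    fun w => if h : w ∈ Y then (φ ⟨(w, 0), h⟩ : W × ZMod 2).2 else 0 with hδ
  have hφeq : ∀ (w : W) (h : w ∈ Y) (b : ZMod 2),
      (φ ⟨(w, b), h⟩ : W × ZMod 2) = (w, b + δ w) := by
    intro w h b
    have h0 : (φ ⟨(w, 0), h⟩ : W × ZMod 2) = (w, δ w) := by
      have h1 := hseg ⟨(w, 0), h⟩
      have h2 : δ w = (φ ⟨(w, 0), h⟩ : W × ZMod 2).2 := by rw [hδ]; exact dif_pos h
      exact Prod.ext h1 h2.symm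
    have h1' : (φ ⟨(w, 1), h⟩ : W × ZMod 2) = (w, 1 + δ w) := by
      have hs := hseg ⟨(w, 1), h⟩
      have hne : (φ ⟨(w, 1), h⟩ : W × ZMod 2).2 ≠ δ w := by
        intro hc
        have heq : φ ⟨(w, 1), h⟩ = φ ⟨(w, 0), h⟩ := by
          apply Subtype.ext
          rw [h0]; exact Prod.ext hs hc
        have h12 := congrArg (fun q : {p : W × ZMod 2 // p.1 ∈ Y} =>
          (q : W × ZMod 2).2) (φ.injective heq)
        simp only at h12
        exact absurd h12 (by decide)
      have key : ∀ x y : ZMod 2, x ≠ y → x = 1 + y := by decide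
      exact Prod.ext hs (key _ _ hne)
    have hb : b = 0 ∨ b = 1 := by
      have : ∀ c : ZMod 2, c = 0 ∨ c = 1 := by decide
      exact this b
    rcases hb with rfl | rfl
    · rw [h0, zero_add]
    · exact h1'
  -- the total flip function
  set ε : W → ZMod 2 :=
    (fun w => if h : w ∈ Set.range us then a h.choose + a' h.choose else δ w) with hε
  have hεX : ∀ i, ε (us i) = a i + a' i := by
    intro i
    have h : us i ∈ Set.range us := ⟨i, rfl⟩
    have h1 : ε (us i) = a h.choose + a' h.choose := by rw [hε]; exact dif_pos h
    rw [h1, husinj h.choose_spec]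
  have hεY : ∀ w ∈ Y, ε w = δ w := by
    intro w hw
    have hnr : w ∉ Set.range us := by
      intro hr
      have hmem : w ∈ Set.range us ∩ clW N Y := ⟨hr, hYcl hw⟩
      rw [hdisj] at hmem; exact hmem
    rw [hε]; exact dif_neg hnr
  -- distinct segments of X cannot share a constraint vertex
  have hdist : ∀ (v : V) (p q : W), p ∈ N v → q ∈ N v →
      p ∈ Set.range us → q ∈ Set.range us → p = q := by
    intro v p q hp hq hpr hqr
    by_contra hne
    have hle := hscat p hpr q hqr hne
    have hadj1 : (biGraph N).Adj (Sum.inr p) (Sum.inl v) := by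
      rw [biGraph, SimpleGraph.fromRel_adj]
      exact ⟨by simp, Or.inr hp⟩
    have hadj2 : (biGraph N).Adj (Sum.inl v) (Sum.inr q) := by
      rw [biGraph, SimpleGraph.fromRel_adj]
      exact ⟨by simp, Or.inl hq⟩
    have h2 : (biGraph N).edist (Sum.inr p) (Sum.inr q) ≤ 2 := by
      have := SimpleGraph.edist_le
        (SimpleGraph.Walk.cons hadj1 (SimpleGraph.Walk.cons hadj2 SimpleGraph.Walk.nil))
      simpa using this
    have hle2 : ((2 * (6 * k) : ℕ) : ℕ∞) ≤ ((2 : ℕ) : ℕ∞) := by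
      refine le_trans hle (le_trans h2 ?_)
      norm_num
    have : (2 * (6 * k) : ℕ) ≤ 2 := by exact_mod_cast hle2
    omega
  -- every constraint whose neighbors lie in X ∪ Y lies entirely in Y, and δ sums to 0
  have hmaster : ∀ (v : V) (x y z : W), nbr v = (x, y, z) →
      x ∈ Set.range us ∪ Y → y ∈ Set.range us ∪ Y → z ∈ Set.range us ∪ Y →
      ε x + ε y + ε z = 0 := by
    intro v x y z hv hx hy hz
    have hNv : N v = {x, y, z} := by rw [hN]; simp [nbrSet, hv]
    have hmem : ∀ w ∈ N v, w ∈ Set.range us ∪ Y := by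
      intro w hw
      rw [hNv] at hw
      rcases hw with h | h | h <;> subst h <;> assumption
    have hallY : ∀ w ∈ N v, w ∈ Y := by
      by_contra hc
      push_neg at hc
      obtain ⟨n, hn, hnY⟩ := hc
      have hnr : n ∈ Set.range us := (hmem n hn).resolve_right hnY
      have hsub : N v \ clW N Y ⊆ {n} := by
        intro m hm
        have hm1 : m ∈ N v := hm.1
        have hm2 : m ∉ Y := fun h => hm.2 (hYcl h)
        have hmr : m ∈ Set.range us := (hmem m hm1).resolve_right hm2
        simp only [Set.mem_singleton_iff]
        exact hdist v m n hm1 hn hmr hnr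
      have hcard : (N v \ clW N Y).ncard ≤ 1 := by
        calc (N v \ clW N Y).ncard ≤ ({n} : Set W).ncard :=
              Set.ncard_le_ncard hsub (Set.toFinite _)
          _ = 1 := Set.ncard_singleton n
      have hsubcl := nbr_subset_of_closed N (isClosedSeg_clW' N Y) hcard
      have hmemcl : n ∈ Set.range us ∩ clW N Y := ⟨hnr, hsubcl hn⟩
      rw [hdisj] at hmemcl; exact hmemcl
    have hxY : x ∈ Y := hallY x (by rw [hNv]; exact Or.inl rfl)
    have hyY : y ∈ Y := hallY y (by rw [hNv]; exact Or.inr (Or.inl rfl))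
    have hzY : z ∈ Y := hallY z (by rw [hNv]; exact Or.inr (Or.inr rfl))
    have hRel : multiRel nbr ((x, 0) : W × ZMod 2) (y, 0) (z, 0) :=
      ⟨⟨v, by simp [hv]⟩, by simp⟩
    have h2 := (hrel ⟨(x, 0), hxY⟩ ⟨(y, 0), hyY⟩ ⟨(z, 0), hzY⟩).mpr hRel
    rw [hφeq x hxY 0, hφeq y hyY 0, hφeq z hzY 0] at h2
    have hsum : δ x + δ y + δ z = 0 := by simpa using h2.2
    rw [hεY x hxY, hεY y hyY, hεY z hzY]
    exact hsum
  -- the extension, flipping each segment by ε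
  set f : {p : W × ZMod 2 // p.1 ∈ Set.range us ∪ Y} →
      {p : W × ZMod 2 // p.1 ∈ Set.range us ∪ Y} :=
    fun p => ⟨((p : W × ZMod 2).1, (p : W × ZMod 2).2 + ε (p : W × ZMod 2).1), p.2⟩
    with hf
  have hinv : Function.Involutive f := by
    intro p
    apply Subtype.ext
    show ((p : W × ZMod 2).1,
        (p : W × ZMod 2).2 + ε (p : W × ZMod 2).1 + ε (p : W × ZMod 2).1)
        = (p : W × ZMod 2)
    have h2 : ∀ x : ZMod 2, x + x = 0 := by decide
    rw [add_assoc, h2, add_zero]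
  refine ⟨Function.Involutive.toPerm f hinv, fun p => rfl, ?_, ?_, ?_⟩
  · intro x y z
    show multiRel nbr (f x : W × ZMod 2) (f y) (f z) ↔ _
    have hfst : ∀ p, ((f p : W × ZMod 2)).1 = (p : W × ZMod 2).1 := fun _ => rfl
    have hsnd : ∀ p, ((f p : W × ZMod 2)).2
        = (p : W × ZMod 2).2 + ε (p : W × ZMod 2).1 := fun _ => rfl
    unfold multiRel
    rw [hfst, hfst, hfst, hsnd, hsnd, hsnd]
    constructor
    · rintro ⟨⟨v, hv⟩, hsum⟩
      have hεs := hmaster v _ _ _ hv x.2 y.2 z.2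
      exact ⟨⟨v, hv⟩, by linear_combination hsum - hεs⟩
    · rintro ⟨⟨v, hv⟩, hsum⟩
      have hεs := hmaster v _ _ _ hv x.2 y.2 z.2
      exact ⟨⟨v, hv⟩, by linear_combination hsum + hεs⟩
  · intro p hp hp'
    show (f ⟨p, hp'⟩ : W × ZMod 2) = _
    obtain ⟨w, b⟩ := p
    rw [hφeq w hp b]
    show (w, b + ε w) = (w, b + δ w)
    rw [hεY w hp]
  · intro i
    show (f ⟨(us i, a i), Or.inl ⟨i, rfl⟩⟩ : W × ZMod 2) = (us i, a' i)
    show (us i, a i + ε (us i)) = (us i, a' i)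
    rw [hεX i]
    have h2 : ∀ x y : ZMod 2, x + (x + y) = y := by decide
    rw [h2]
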